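/- For d = 2, the 2-dimensional Levi-Civita symbol ε and any order-N cubical hypermatrix A of side length 2, the scalar (1/2) (⊗_{k=1}^N ε) * (hvec(A), hvec(A)) equals Σ_{σ_2,...,σ_N ∈ S_2} (Π_{k=2}^N sgn(σ_k)) Π_{i=1}^2 a_{i,σ_2(i),...,σ_N(i)} when N is even, and 0 when N is odd. -/

import Mathlib

/-- The 2-dimensional Levi-Civita symbol as a 2×2 matrix:
`ε_{12} = 1`, `ε_{21} = -1`, `ε_{11} = ε_{22} = 0`. -/
def eps2 (F : Type*) [Field F] : Matrix (Fin 2) (Fin 2) F := !![0, 1; -1, 0]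

/-- The canonical vectorization `hvec(A) ∈ F^{2^N}` of a cubical hypermatrix of
side length 2. -/
def hvec {F : Type*} [Field F] {N : ℕ} (A : (Fin N → Fin 2) → F) :
    Fin (2 ^ N) → F :=
  fun m => A (finFunctionFinEquiv.symm m)

/-- The equivalence between `Fin 2` and `Perm (Fin 2)` by evaluation at `0`. -/
def permTwo : Fin 2 ≃ Equiv.Perm (Fin 2) where
  toFun i := if i = 0 then 1 else Equiv.swap 0 1
  invFun σ := σ 0
  left_inv := by decide
  right_inv := by decide

lemma permTwo_zero (i : Fin 2) : permTwo i 0 = i := by fin_cases i <;> decide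

lemma permTwo_one (i : Fin 2) : permTwo i 1 = i + 1 := by fin_cases i <;> decide

lemma eps2_diag {F : Type*} [Field F] (i : Fin 2) : eps2 F i i = 0 := by
  fin_cases i <;> simp [eps2]

lemma eps2_sign {F : Type*} [Field F] (i : Fin 2) :
    eps2 F i (i + 1) = ((Equiv.Perm.sign (permTwo i) : ℤ) : F) := by
  have h : ∀ j : Fin 2, ((Equiv.Perm.sign (permTwo j) : ℤˣ) : ℤ) =
      if j = 0 then 1 else -1 := by decide
  fin_cases i <;> simp [eps2, h]

lemma eps2_sign_neg {F : Type*} [Field F] (i : Fin 2) :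
    eps2 F (i + 1) ((i + 1) + 1) = - eps2 F i (i + 1) := by
  fin_cases i <;> simp [eps2]

/-- For `d = 2` and an order-`(N+1)` cubical hypermatrix `A` of side length 2,
the scalar `(1/2)(⊗_{k=1}^{N+1} ε) * (hvec A, hvec A)` (the bilinear form
`vᵀ M v` with `v = hvec A` and `M` the `(N+1)`-fold Kronecker power of `ε`)
equals `Σ_{σ_2,...,σ_{N+1} ∈ S_2} (Π_k sgn σ_k) Π_{i=1}^2 a_{i,σ_2(i),...}`
when the order `N+1` is even, and `0` when it is odd. -/
theorem stmt19 {F : Type*} [Field F] [CharZero F] (N : ℕ)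
    (A : (Fin (N + 1) → Fin 2) → F) :
    (2 : F)⁻¹ *
      ∑ r : Fin (2 ^ (N + 1)), ∑ c : Fin (2 ^ (N + 1)),
        hvec A r *
          (∏ k : Fin (N + 1),
            eps2 F (finFunctionFinEquiv.symm r k) (finFunctionFinEquiv.symm c k)) *
          hvec A c =
      if Even (N + 1) then
        ∑ σ : Fin N → Equiv.Perm (Fin 2),
          (∏ k, ((Equiv.Perm.sign (σ k) : ℤ) : F)) *
            ∏ i : Fin 2, A (Fin.cons i fun k => σ k i)
      else 0 := by
  classical
  set c : Fin 2 → F := fun i => eps2 F i (i + 1) with hc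
  -- Step 1: reindex the double sum over functions
  have h1 : (∑ r : Fin (2 ^ (N + 1)), ∑ co : Fin (2 ^ (N + 1)),
        hvec A r *
          (∏ k : Fin (N + 1),
            eps2 F (finFunctionFinEquiv.symm r k) (finFunctionFinEquiv.symm co k)) *
          hvec A co)
      = ∑ f : Fin (N + 1) → Fin 2, ∑ g : Fin (N + 1) → Fin 2,
          A f * (∏ k, eps2 F (f k) (g k)) * A g := by
    rw [← Equiv.sum_comp (finFunctionFinEquiv : (Fin (N + 1) → Fin 2) ≃ Fin (2 ^ (N + 1)))]
    refine Finset.sum_congr rfl fun f _ => ?_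
    rw [← Equiv.sum_comp (finFunctionFinEquiv : (Fin (N + 1) → Fin 2) ≃ Fin (2 ^ (N + 1)))]
    refine Finset.sum_congr rfl fun g _ => ?_
    simp [hvec]
  -- Step 2: collapse inner sum to the "flip" term
  have h2 : ∀ f : Fin (N + 1) → Fin 2,
      (∑ g : Fin (N + 1) → Fin 2, A f * (∏ k, eps2 F (f k) (g k)) * A g)
      = A f * (∏ k, c (f k)) * A (fun k => f k + 1) := by
    intro f
    rw [Finset.sum_eq_single (fun k => f k + 1)]
    · intro g _ hg
      have hex : ∃ k, g k = f k := by
        by_contra h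
        push_neg at h
        apply hg; funext k
        have key : ∀ x y : Fin 2, x ≠ y → x = y + 1 := by decide
        exact key (g k) (f k) (h k)
      obtain ⟨k, hk⟩ := hex
      have hz : eps2 F (f k) (g k) = 0 := by rw [hk]; exact eps2_diag _
      rw [Finset.prod_eq_zero (Finset.mem_univ k) hz]; ring
    · intro h; exact absurd (Finset.mem_univ _) h
  -- Step 3: split off the first coordinate
  have h3 : (∑ f : Fin (N + 1) → Fin 2, A f * (∏ k, c (f k)) * A (fun k => f k + 1))
      = ∑ i : Fin 2, ∑ t : Fin N → Fin 2,
          A (Fin.cons i t) * (c i * ∏ k, c (t k)) *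
            A (Fin.cons (i + 1) (fun k => t k + 1)) := by
    rw [← Equiv.sum_comp (Fin.consEquiv (fun _ : Fin (N + 1) => Fin 2)),
      Fintype.sum_prod_type]
    refine Finset.sum_congr rfl fun i _ => Finset.sum_congr rfl fun t _ => ?_
    have hflip : (fun k => Fin.cons (α := fun _ => Fin 2) i t k + 1)
        = Fin.cons (i + 1) (fun k => t k + 1) := by
      funext k
      refine Fin.cases ?_ (fun j => ?_) k <;> simp
    simp only [Fin.consEquiv_apply, Fin.prod_univ_succ, Fin.cons_zero, Fin.cons_succ, hflip]
    rfl
  set S : F := ∑ t : Fin N → Fin 2,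
      (∏ k, c (t k)) * (A (Fin.cons 0 t) * A (Fin.cons 1 (fun k => t k + 1))) with hS
  -- Step 4: evaluate the two summands
  have h4 : (∑ i : Fin 2, ∑ t : Fin N → Fin 2,
        A (Fin.cons i t) * (c i * ∏ k, c (t k)) *
          A (Fin.cons (i + 1) (fun k => t k + 1)))
      = S + (-1 : F) ^ (N + 1) * S := by
    rw [Fin.sum_univ_two]
    have hc0 : c 0 = 1 := by simp [hc, eps2]
    have hc1 : c 1 = -1 := by simp [hc, eps2]
    have hfirst : (∑ t : Fin N → Fin 2,
        A (Fin.cons 0 t) * (c 0 * ∏ k, c (t k)) *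
          A (Fin.cons (0 + 1) (fun k => t k + 1))) = S := by
      refine Finset.sum_congr rfl fun t _ => ?_
      have : (0 : Fin 2) + 1 = 1 := rfl
      rw [this, hc0]; ring
    have hsecond : (∑ t : Fin N → Fin 2,
        A (Fin.cons 1 t) * (c 1 * ∏ k, c (t k)) *
          A (Fin.cons (1 + 1) (fun k => t k + 1))) = (-1 : F) ^ (N + 1) * S := by
      rw [← Equiv.sum_comp (Equiv.piCongrRight fun _ : Fin N => Equiv.addRight (1 : Fin 2))]
      rw [hS, Finset.mul_sum]
      refine Finset.sum_congr rfl fun t _ => ?_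
      have happ : ∀ k, (Equiv.piCongrRight fun _ : Fin N => Equiv.addRight (1 : Fin 2)) t k
          = t k + 1 := fun k => rfl
      have h11 : (1 : Fin 2) + 1 = 0 := rfl
      have hflip2 : (fun k => ((Equiv.piCongrRight fun _ : Fin N =>
          Equiv.addRight (1 : Fin 2)) t) k + 1) = t := by
        funext k; rw [happ]
        have : ∀ x : Fin 2, x + 1 + 1 = x := by decide
        exact this (t k)
      have hprod : (∏ k, c (((Equiv.piCongrRight fun _ : Fin N =>
          Equiv.addRight (1 : Fin 2)) t) k)) = (-1 : F) ^ N * ∏ k, c (t k) := by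
        have hn : ∀ k : Fin N, c (t k + 1) = - c (t k) := fun k => eps2_sign_neg (t k)
        simp only [happ, hn]
        calc (∏ x : Fin N, -c (t x)) = ∏ x : Fin N, (-1 : F) * c (t x) :=
              Finset.prod_congr rfl fun x _ => (neg_one_mul _).symm
          _ = (-1 : F) ^ N * ∏ k, c (t k) := by
              rw [Finset.prod_mul_distrib, Finset.prod_const]
              simp
      have hfun : ((Equiv.piCongrRight fun _ : Fin N =>
          Equiv.addRight (1 : Fin 2)) t) = fun k => t k + 1 := funext happ
      rw [h11, hflip2, hprod, hc1, hfun]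
      ring
    rw [hfirst, hsecond]
  rw [h1, Finset.sum_congr rfl (fun f _ => h2 f), h3, h4]
  by_cases hpar : Even (N + 1)
  · rw [if_pos hpar, hpar.neg_one_pow]
    have hhalf : (2 : F)⁻¹ * (S + 1 * S) = S := by
      field_simp
      ring
    rw [hhalf]
    -- Step 5: identify S with the permutation sum
    rw [← Equiv.sum_comp (Equiv.piCongrRight fun _ : Fin N => permTwo)]
    rw [hS]
    refine Finset.sum_congr rfl fun t _ => ?_
    have happ : ∀ k, (Equiv.piCongrRight fun _ : Fin N => permTwo) t k = permTwo (t k) :=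
      fun k => rfl
    have hsg : (∏ k, ((Equiv.Perm.sign ((Equiv.piCongrRight fun _ : Fin N => permTwo) t k)
        : ℤ) : F)) = ∏ k, c (t k) := by
      refine Finset.prod_congr rfl fun k _ => ?_
      rw [happ]
      exact (eps2_sign (t k)).symm
    rw [hsg, Fin.prod_univ_two]
    have h0 : (fun k => (Equiv.piCongrRight fun _ : Fin N => permTwo) t k 0) = t := by
      funext k; rw [happ, permTwo_zero]
    have h1' : (fun k => (Equiv.piCongrRight fun _ : Fin N => permTwo) t k 1)
        = fun k => t k + 1 := by
      funext k; rw [happ, permTwo_one]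
    rw [h0, h1']
  · rw [if_neg hpar]
    have hodd : Odd (N + 1) := Nat.odd_iff.mpr (Nat.not_even_iff.mp hpar)
    rw [hodd.neg_one_pow]
    ring
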